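/- arXiv:1505.05852 — 2 statements merged into one kernel-verified Lean document; each statement's English description precedes it below -/
import Mathlib

section
/- The number of single-peaked (n,m)-elections satisfies a(n,m) ≥ (m!/2) · (2^{(m-1)n} + (2^{m-1}−2)^n − 2·(2^{m-1}−1)^n) for all n, m ≥ 2. -/
/-!
Fix an axis `A`. Ranking the candidates outwards from the peak, each of the ranks `1, …, m-1`
goes either to the left or to the right of the peak, which yields `2^(m-1)` votes single-peaked
w.r.t. `A`, among them `A` itself and its reverse. By inclusion–exclusion, at least
`2^((m-1)n) - 2(2^(m-1)-1)^n + (2^(m-1)-2)^n` elections are single-peaked w.r.t. `A` and contain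
both `A` and its reverse. An election containing a vote `V` and its reverse has no axes besides
`V` and its reverse, so summing over the `m!` axes counts each such election at most twice.
-/

def SPwrt {m : ℕ} (V A : Equiv.Perm (Fin m)) : Prop :=
  ∀ c₁ c₂ c₃ : Fin m, ¬(A c₁ < A c₂ ∧ A c₂ < A c₃ ∧ V c₁ < V c₂ ∧ V c₃ < V c₂)

def SPElection {n m : ℕ} (P : Fin n → Equiv.Perm (Fin m)) : Prop :=
  ∃ A : Equiv.Perm (Fin m), ∀ i, SPwrt (P i) A

open Finset Function Equiv Fintype

theorem card_filter_exists_eq_and_exists_eq {ι β : Type*} [Fintype ι] [DecidableEq ι]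
    [DecidableEq β] {S : Finset β} {a b : β} (ha : a ∈ S) (hb : b ∈ S) (hab : a ≠ b) :
    (#{P ∈ piFinset fun _ : ι => S | (∃ i, P i = a) ∧ ∃ i, P i = b} : ℤ)
      = #S ^ card ι - 2 * (#S - 1) ^ card ι + (#S - 2) ^ card ι := by
  have hsplit : {P ∈ piFinset fun _ : ι => S | (∃ i, P i = a) ∧ ∃ i, P i = b}
      = (piFinset fun _ => S) \
          ((piFinset fun _ => S.erase a) ∪ piFinset fun _ => S.erase b) := by
    ext P
    simp only [mem_filter, mem_sdiff, mem_union, mem_piFinset, mem_erase]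
    grind
  have hsub : ((piFinset fun _ => S.erase a) ∪ piFinset fun _ => S.erase b)
      ⊆ piFinset fun _ : ι => S :=
    union_subset (piFinset_subset _ _ fun _ => erase_subset _ _)
      (piFinset_subset _ _ fun _ => erase_subset _ _)
  have hinter := card_union_add_card_inter (piFinset fun _ : ι => S.erase a)
    (piFinset fun _ => S.erase b)
  have herase : S.erase a ∩ S.erase b = (S.erase a).erase b := by
    ext
    simp only [mem_inter, mem_erase]
    tauto
  rw [← piFinset_inter, herase, ← Nat.cast_inj (R := ℤ)] at hinter
  have hb' : b ∈ S.erase a := mem_erase.2 ⟨hab.symm, hb⟩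
  rw [hsplit, card_sdiff_of_subset hsub, Nat.cast_sub (card_le_card hsub)]
  simp only [card_piFinset, prod_const, card_univ] at hinter ⊢
  push_cast [cast_card_erase_of_mem ha, cast_card_erase_of_mem hb,
    cast_card_erase_of_mem hb'] at hinter ⊢
  linear_combination -hinter

theorem strictMono_or_strictAnti_of_between {α β : Type*} [LinearOrder α] [BoundedOrder α]
    [LinearOrder β] {f : α → β} (hf : Injective f)
    (hbetween : ∀ ⦃i j k⦄, i < j → j < k → (f i < f j ↔ f j < f k)) :
    StrictMono f ∨ StrictAnti f := by
  have hfne {u v : α} (h : u < v) : f u ≠ f v := hf.ne h.ne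
  have hbot_top {x y : α} (hxy : x < y) : f x < f y ↔ f ⊥ < f ⊤ := by
    have hbot : f x < f y ↔ f ⊥ < f y := by
      rcases (bot_le : ⊥ ≤ x).eq_or_lt with rfl | hx
      · rfl
      · grind [hbetween hx hxy, hfne hx, hfne hxy, hfne (hx.trans hxy)]
    have htop : f ⊥ < f y ↔ f ⊥ < f ⊤ := by
      rcases (le_top : y ≤ ⊤).eq_or_lt with rfl | hy
      · rfl
      · have hy' : ⊥ < y := bot_le.trans_lt hxy
        grind [hbetween hy' hy, hfne hy', hfne hy, hfne (hy'.trans hy)]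
    exact hbot.trans htop
  by_cases h : f ⊥ < f ⊤
  · exact Or.inl fun x y hxy => (hbot_top hxy).2 h
  · exact Or.inr fun x y hxy => (not_lt.1 (mt (hbot_top hxy).1 h)).lt_of_ne (hfne hxy).symm

theorem Fin.revPerm_mul_ne_self {m : ℕ} (hm : 2 ≤ m) (A : Perm (Fin m)) :
    Fin.revPerm * A ≠ A := by
  intro h
  have := congrArg (fun σ : Perm (Fin m) => (σ ⟨0, by omega⟩ : ℕ)) (mul_eq_right.1 h)
  simp only [Fin.revPerm_apply, Fin.val_rev, Perm.one_apply] at this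
  omega

namespace SPwrt

variable {m : ℕ}

instance (V A : Perm (Fin m)) : Decidable (SPwrt V A) := by
  unfold SPwrt; infer_instance

theorem mul_right_iff {V A B : Perm (Fin m)} : SPwrt (V * B) (A * B) ↔ SPwrt V A :=
  ⟨fun h c₁ c₂ c₃ => by simpa using h (B⁻¹ c₁) (B⁻¹ c₂) (B⁻¹ c₃),
    fun h c₁ c₂ c₃ => h (B c₁) (B c₂) (B c₃)⟩

theorem one_iff {W : Perm (Fin m)} :
    SPwrt W 1 ↔ ∀ ⦃i j k⦄, i < j → j < k → ¬(W i < W j ∧ W k < W j) := by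
  simp [SPwrt]

theorem self (A : Perm (Fin m)) : SPwrt A A :=
  fun _ _ _ ⟨_, h₂₃, _, h₃₂⟩ => lt_asymm h₂₃ h₃₂

theorem revPerm_mul_self (A : Perm (Fin m)) : SPwrt (Fin.revPerm * A) A :=
  fun _ _ _ ⟨h₁₂, _, h₁₂', _⟩ => lt_asymm h₁₂ (Fin.rev_lt_rev.1 h₁₂')

/-- Read along the axis `B`, the vote `V` has no peak and (as `rev * V` has no peak) no valley,
so it is strictly monotone or strictly antitone. -/
theorem eq_or_eq_revPerm_mul [NeZero m] {V B : Perm (Fin m)} (h : SPwrt V B)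
    (hrev : SPwrt (Fin.revPerm * V) B) : B = V ∨ B = Fin.revPerm * V := by
  rw [← mul_right_iff (B := B⁻¹), mul_inv_cancel, one_iff] at h hrev
  set f := V * B⁻¹
  have hbetween : ∀ ⦃i j k⦄, i < j → j < k → (f i < f j ↔ f j < f k) := by
    intro i j k hij hjk
    have hvalley := hrev hij hjk
    simp only [Perm.mul_apply, Fin.revPerm_apply, Fin.rev_lt_rev] at hvalley
    exact ⟨fun hij' => (not_lt.1 fun h' => h hij hjk ⟨hij', h'⟩).lt_of_ne
        (f.injective.ne hjk.ne),
      fun hjk' => (not_lt.1 fun h' => hvalley ⟨h', hjk'⟩).lt_of_ne (f.injective.ne hij.ne)⟩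
  rcases strictMono_or_strictAnti_of_between f.injective hbetween with hmono | hanti
  · have hf : V * B⁻¹ = 1 := Perm.ext (congrFun hmono.eq_id)
    exact Or.inl (mul_inv_eq_one.1 hf).symm
  · have hf : Fin.revPerm * (V * B⁻¹) = 1 :=
      Perm.ext (congrFun (Fin.rev_strictAnti.comp hanti).eq_id)
    rw [← mul_assoc, mul_inv_eq_one] at hf
    exact Or.inr hf.symm

end SPwrt

instance {n m : ℕ} (P : Fin n → Perm (Fin m)) : Decidable (SPElection P) := by
  unfold SPElection; infer_instance

namespace SinglePeaked

variable {m : ℕ} (L : Finset (Fin m))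

/-- Axis position of the candidate of rank `r` in the vote that puts the ranks in `L` to the
left of the others, ordered so that ranks increase away from the peak on both sides. -/
def position (r : Fin m) : ℕ :=
  if r ∈ L then #{u ∈ L | r < u} else #L + #{u ∈ Lᶜ | u < r}

variable {L}

theorem position_lt_position_of_mem_of_mem {r s : Fin m} (hr : r ∈ L) (hs : s ∈ L)
    (hrs : r < s) : position L s < position L r := by
  simp only [position, hr, hs, if_true]
  refine card_lt_card ⟨fun u hu => ?_, fun h => ?_⟩
  · simp only [mem_filter] at hu ⊢
    exact ⟨hu.1, hrs.trans hu.2⟩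
  · simpa using (mem_filter.1 (h (mem_filter.2 ⟨hs, hrs⟩))).2

theorem position_lt_position_of_notMem_of_notMem {r s : Fin m} (hr : r ∉ L) (hs : s ∉ L)
    (hrs : r < s) : position L r < position L s := by
  simp only [position, hr, hs, if_false]
  refine Nat.add_lt_add_left (card_lt_card ⟨fun u hu => ?_, fun h => ?_⟩) _
  · simp only [mem_filter] at hu ⊢
    exact ⟨hu.1, hu.2.trans hrs⟩
  · simpa using (mem_filter.1 (h (mem_filter.2 ⟨mem_compl.2 hr, hrs⟩))).2

theorem position_lt_position_of_mem_of_notMem {r s : Fin m} (hr : r ∈ L) (hs : s ∉ L) :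
    position L r < position L s := by
  simp only [position, hr, hs, if_true, if_false]
  exact (card_lt_card (filter_ssubset.2 ⟨r, hr, lt_irrefl r⟩)).trans_le (Nat.le_add_right _ _)

theorem position_lt (r : Fin m) : position L r < m := by
  have hL := card_add_card_compl L
  rw [Fintype.card_fin] at hL
  by_cases hr : r ∈ L
  · have := card_lt_card (filter_ssubset (p := (r < ·)).2 ⟨r, hr, lt_irrefl r⟩)
    simp only [position, hr, if_true]
    omega
  · have := card_lt_card (filter_ssubset (p := (· < r)).2 ⟨r, mem_compl.2 hr, lt_irrefl r⟩)
    simp only [position, hr, if_false]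
    omega

theorem position_injective : Injective (position L) := by
  intro r s h
  by_contra hne
  wlog hrs : r < s generalizing r s
  · exact this h.symm (Ne.symm hne) ((Ne.lt_or_gt hne).resolve_left hrs)
  by_cases hr : r ∈ L <;> by_cases hs : s ∈ L
  · exact (position_lt_position_of_mem_of_mem hr hs hrs).ne h.symm
  · exact (position_lt_position_of_mem_of_notMem hr hs).ne h
  · exact (position_lt_position_of_mem_of_notMem hs hr).ne h.symm
  · exact (position_lt_position_of_notMem_of_notMem hr hs hrs).ne h

variable (L) in
noncomputable def positionPerm : Perm (Fin m) :=
  Equiv.ofBijective (fun r => ⟨position L r, position_lt r⟩)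
    (Finite.injective_iff_bijective.1 fun _ _ h => position_injective (Fin.mk.inj_iff.1 h))

theorem positionPerm_lt_positionPerm_iff {r s : Fin m} :
    positionPerm L r < positionPerm L s ↔ position L r < position L s := Iff.rfl

theorem SPwrt_one_positionPerm : SPwrt 1 (positionPerm L) := by
  rintro r₁ r₂ r₃ ⟨h₁₂, h₂₃, hr₁₂, hr₃₂⟩
  simp only [positionPerm_lt_positionPerm_iff, Perm.one_apply] at *
  by_cases h₂ : r₂ ∈ L
  · by_cases h₁ : r₁ ∈ L
    · exact (position_lt_position_of_mem_of_mem h₁ h₂ hr₁₂).not_gt h₁₂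
    · exact (position_lt_position_of_mem_of_notMem h₂ h₁).not_gt h₁₂
  · by_cases h₃ : r₃ ∈ L
    · exact (position_lt_position_of_mem_of_notMem h₃ h₂).not_gt h₂₃
    · exact (position_lt_position_of_notMem_of_notMem h₃ h₂ hr₃₂).not_gt h₂₃

theorem mem_iff_position_lt_position_zero [NeZero m] (h0 : 0 ∉ L) {r : Fin m} :
    r ∈ L ↔ position L r < position L 0 := by
  refine ⟨fun hr => position_lt_position_of_mem_of_notMem hr h0, fun hlt => ?_⟩
  by_contra hr
  rcases (Fin.zero_le r).eq_or_lt with rfl | hr0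
  · exact lt_irrefl _ hlt
  · exact (position_lt_position_of_notMem_of_notMem h0 hr hr0).not_gt hlt

theorem two_pow_le_card_SPwrt [NeZero m] (A : Perm (Fin m)) :
    2 ^ (m - 1) ≤ #{V | SPwrt V A} := by
  calc 2 ^ (m - 1) = #(univ.erase (0 : Fin m)).powerset := by simp [card_erase_of_mem]
    _ ≤ #{V | SPwrt V A} := by
      refine card_le_card_of_injOn (fun L => (positionPerm L)⁻¹ * A) (fun L _ => ?_) ?_
      · have := SPwrt.mul_right_iff (B := (positionPerm L)⁻¹ * A) |>.2
          (SPwrt_one_positionPerm (L := L))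
        simpa [← mul_assoc] using this
      · intro L hL L' hL' h
        simp only [coe_powerset, Set.mem_preimage, Set.mem_powerset_iff, coe_subset,
          subset_erase, subset_univ, true_and] at hL hL'
        have hpos : position L = position L' := funext fun r => by
          simpa [positionPerm] using
            congrArg Fin.val (Perm.ext_iff.1 (inv_injective (mul_right_cancel h)) r)
        ext r
        rw [mem_iff_position_lt_position_zero hL, mem_iff_position_lt_position_zero hL', hpos]

variable {n : ℕ}

def SPwrtWithAxisAndReverse (A : Perm (Fin m)) (P : Fin n → Perm (Fin m)) : Prop :=
  (∀ i, SPwrt (P i) A) ∧ (∃ i, P i = A) ∧ ∃ i, P i = Fin.revPerm * A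

instance (A : Perm (Fin m)) (P : Fin n → Perm (Fin m)) :
    Decidable (SPwrtWithAxisAndReverse A P) := by
  unfold SPwrtWithAxisAndReverse; infer_instance

theorem SPwrtWithAxisAndReverse.spElection {A : Perm (Fin m)} {P : Fin n → Perm (Fin m)}
    (h : SPwrtWithAxisAndReverse A P) : SPElection P :=
  ⟨A, h.1⟩

theorem card_SPwrtWithAxisAndReverse_ge (hm : 2 ≤ m) (A : Perm (Fin m)) :
    ((2 : ℝ) ^ (m - 1)) ^ n - 2 * ((2 : ℝ) ^ (m - 1) - 1) ^ n + ((2 : ℝ) ^ (m - 1) - 2) ^ n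
      ≤ #{P : Fin n → Perm (Fin m) | SPwrtWithAxisAndReverse A P} := by
  have : NeZero m := ⟨by omega⟩
  have hpair : {A, Fin.revPerm * A} ⊆ ({V | SPwrt V A} : Finset _) := by
    simp [insert_subset_iff, SPwrt.self, SPwrt.revPerm_mul_self]
  have htwo : #{A, Fin.revPerm * A} ≤ 2 ^ (m - 1) :=
    card_le_two.trans (Nat.le_self_pow (by omega) 2)
  obtain ⟨S, hpairS, hS, hcard⟩ :=
    exists_subsuperset_card_eq hpair htwo (two_pow_le_card_SPwrt A)
  have hA : A ∈ S := hpairS (mem_insert_self _ _)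
  have hrevA : Fin.revPerm * A ∈ S := hpairS (mem_insert_of_mem (mem_singleton_self _))
  set X := {P ∈ piFinset fun _ : Fin n => S | (∃ i, P i = A) ∧ ∃ i, P i = Fin.revPerm * A}
  have hX : (#X : ℤ) = (#S : ℤ) ^ n - 2 * ((#S : ℤ) - 1) ^ n + ((#S : ℤ) - 2) ^ n := by
    have h := card_filter_exists_eq_and_exists_eq (ι := Fin n) hA hrevA
      (Fin.revPerm_mul_ne_self hm A).symm
    rw [Fintype.card_fin] at h
    -- the two filters differ only in their decidability instances
    convert h
  have hsub : X ⊆ ({P | SPwrtWithAxisAndReverse A P} : Finset (Fin n → Perm (Fin m))) := by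
    intro P hP
    simp only [X, mem_filter, mem_piFinset] at hP
    exact mem_filter.2 ⟨mem_univ _, fun i => (mem_filter.1 (hS (hP.1 i))).2, hP.2⟩
  calc _ = ((#X : ℤ) : ℝ) := by rw [hX, hcard]; push_cast; ring
    _ ≤ _ := by exact_mod_cast card_le_card hsub

theorem card_SPwrtWithAxisAndReverse_le [NeZero m] (P : Fin n → Perm (Fin m)) :
    #{A | SPwrtWithAxisAndReverse A P} ≤ 2 := by
  rcases ({A | SPwrtWithAxisAndReverse A P} : Finset _).eq_empty_or_nonempty
    with hnone | ⟨A, hA⟩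
  · simp [hnone]
  · have hsub : ({A | SPwrtWithAxisAndReverse A P} : Finset _) ⊆ {A, Fin.revPerm * A} := by
      intro B hB
      obtain ⟨-, ⟨i, hi⟩, ⟨j, hj⟩⟩ := (mem_filter.1 hA).2
      have hB := (mem_filter.1 hB).2.1
      rw [mem_insert, mem_singleton]
      exact SPwrt.eq_or_eq_revPerm_mul (hi ▸ hB i) (hj ▸ hB j)
    exact (card_le_card hsub).trans card_le_two

end SinglePeaked

open SinglePeaked

theorem count_single_peaked_lower_general (n m : ℕ) (hm : 2 ≤ m) :
    ((Nat.factorial m : ℝ) / 2) *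
        ((2 : ℝ) ^ ((m - 1) * n) + ((2 : ℝ) ^ (m - 1) - 2) ^ n
          - 2 * ((2 : ℝ) ^ (m - 1) - 1) ^ n)
      ≤ ({P : Fin n → Equiv.Perm (Fin m) | SPElection P}.ncard : ℝ) := by
  have : NeZero m := ⟨by omega⟩
  have habove (A : Perm (Fin m)) : ({P | SPwrtWithAxisAndReverse A P} : Finset _)
      ⊆ bipartiteAbove SPwrtWithAxisAndReverse {P : Fin n → Perm (Fin m) | SPElection P} A :=
    fun P hP => (mem_bipartiteAbove _).2
      ⟨mem_filter.2 ⟨mem_univ _, (mem_filter.1 hP).2.spElection⟩, (mem_filter.1 hP).2⟩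
  have hdouble := card_nsmul_le_card_nsmul (s := univ)
    (t := {P : Fin n → Perm (Fin m) | SPElection P}) (r := SPwrtWithAxisAndReverse)
    (n := (2 : ℝ))
    (fun A _ => (card_SPwrtWithAxisAndReverse_ge hm A).trans
      (Nat.cast_le.2 (card_le_card (habove A))))
    (fun P _ => by exact_mod_cast card_SPwrtWithAxisAndReverse_le P)
  rw [Set.ncard_eq_toFinset_card', Set.toFinset_ofPred]
  simp only [card_univ, Fintype.card_perm, Fintype.card_fin, nsmul_eq_mul] at hdouble
  rw [pow_mul]
  linarith

/-- Lower bound on the number of single-peaked `(n,m)`-elections: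
`a(n,m) ≥ (m!/2)·(2^((m-1)n) + (2^(m-1)−2)^n − 2·(2^(m-1)−1)^n)` for `n, m ≥ 2`. -/
theorem count_single_peaked_lower (n m : ℕ) (hn : 2 ≤ n) (hm : 2 ≤ m) :
    ((Nat.factorial m : ℝ) / 2) *
        ((2 : ℝ) ^ ((m - 1) * n) + ((2 : ℝ) ^ (m - 1) - 2) ^ n
          - 2 * ((2 : ℝ) ^ (m - 1) - 1) ^ n)
      ≤ ({P : Fin n → Equiv.Perm (Fin m) | SPElection P}.ncard : ℝ) :=
  count_single_peaked_lower_general n m hm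
end

section
/- Under the Impartial Anonymous Culture assumption with 3 candidates, the probability that a multiset of n votes is single-peaked equals 60n / ((n+2)(n+3)(n+4)). -/
open Finset Equiv Nat

theorem Nat.factorial_mul_multichoose_succ (k n : ℕ) :
    k ! * (k + 1).multichoose n = (n + 1).ascFactorial k := by
  rw [multichoose_eq, ascFactorial_eq_factorial_mul_choose, add_right_comm, add_tsub_cancel_right,
    add_comm k n, choose_symm_add]

theorem Finset.card_sym {α : Type*} [DecidableEq α] (s : Finset α) (n : ℕ) :
    #(s.sym n) = (#s).multichoose n := by
  conv_lhs => rw [← s.attach_map_val, sym_map, card_map, attach_eq_univ, sym_univ, card_univ,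
    Sym.card_sym_eq_multichoose, Fintype.card_coe]

theorem Finset.card_union_union_add_card_inter {α : Type*} [DecidableEq α] (s t u : Finset α) :
    #(s ∪ t ∪ u) + #(s ∩ t) + #(s ∩ u) + #(t ∩ u) = #s + #t + #u + #(s ∩ t ∩ u) := by
  have hst := card_union_add_card_inter s t
  have hstu := card_union_add_card_inter (s ∪ t) u
  have hsutu := card_union_add_card_inter (s ∩ u) (t ∩ u)
  rw [union_inter_distrib_right] at hstu
  rw [← inter_inter_distrib_right] at hsutu
  omega

theorem Multiset.ncard_setOf_card_eq (α : Type*) (n : ℕ) :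
    {M : Multiset α | Multiset.card M = n}.ncard = (Nat.card α).multichoose n := by
  rw [← Nat.card_coe_set_eq]
  exact Sym.natCard_sym_eq_multichoose α n

theorem Multiset.ncard_setOf_card_eq_and {α : Type*} [DecidableEq α] [Fintype α] (n : ℕ)
    (p : Multiset α → Prop) [DecidablePred p] :
    {M : Multiset α | Multiset.card M = n ∧ p M}.ncard = #{x : Sym α n | p x} := by
  rw [← Nat.card_coe_set_eq, ← Fintype.card_subtype, ← Nat.card_eq_fintype_card]
  exact Nat.card_congr (subtypeSubtypeEquivSubtypeInter _ p).symm

/-- `V c` is the position of candidate `c` in the vote `V`, and position `2` is last. The axis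
`A` places candidate `c` at position `A c`, so `A.symm 1` is the middle candidate of the axis. -/
theorem SPwrt_iff_ne_two (V A : Perm (Fin 3)) : SPwrt V A ↔ V (A.symm 1) ≠ 2 := by
  revert V A
  unfold SPwrt
  decide

theorem exists_SPwrt_iff (M : Multiset (Perm (Fin 3))) :
    (∃ A, ∀ V ∈ M, SPwrt V A) ↔ ∃ c, ∀ V ∈ M, V c ≠ 2 := by
  simp only [SPwrt_iff_ne_two]
  constructor
  · rintro ⟨A, hA⟩
    exact ⟨A.symm 1, hA⟩
  · rintro ⟨c, hc⟩
    exact ⟨swap 1 c, by simpa using hc⟩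

def notLast (c : Fin 3) : Finset (Perm (Fin 3)) := {V | V c ≠ 2}

theorem card_notLast (c : Fin 3) : #(notLast c) = 4 := by
  revert c
  decide

theorem card_notLast_inter_notLast {c c' : Fin 3} (h : c ≠ c') :
    #(notLast c ∩ notLast c') = 2 := by
  revert c c'
  decide

theorem notLast_inter_notLast_inter_notLast : notLast 0 ∩ notLast 1 ∩ notLast 2 = ∅ := by
  decide

theorem ncard_singlePeaked (n : ℕ) :
    {M : Multiset (Perm (Fin 3)) | Multiset.card M = n ∧ ∃ A, ∀ V ∈ M, SPwrt V A}.ncard =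
      #((notLast 0).sym n ∪ (notLast 1).sym n ∪ (notLast 2).sym n) := by
  simp only [exists_SPwrt_iff, Multiset.ncard_setOf_card_eq_and]
  congr 1
  ext x
  simp [mem_sym_iff, notLast, Fin.exists_fin_succ]

theorem card_union_sym_notLast_add (n : ℕ) (hn : n ≠ 0) :
    #((notLast 0).sym n ∪ (notLast 1).sym n ∪ (notLast 2).sym n) + 3 * (n + 1) =
      3 * multichoose 4 n := by
  have h := card_union_union_add_card_inter ((notLast 0).sym n) ((notLast 1).sym n)
    ((notLast 2).sym n)
  simp only [← sym_inter, card_sym, card_notLast, notLast_inter_notLast_inter_notLast,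
    card_notLast_inter_notLast (show (0 : Fin 3) ≠ 1 by decide),
    card_notLast_inter_notLast (show (0 : Fin 3) ≠ 2 by decide),
    card_notLast_inter_notLast (show (1 : Fin 3) ≠ 2 by decide), card_empty, multichoose_two] at h
  obtain ⟨m, rfl⟩ := exists_eq_succ_of_ne_zero hn
  rw [multichoose_zero_succ] at h
  omega

/-- Under the Impartial Anonymous Culture assumption (elections are multisets of
`n` votes, all equally likely) with 3 candidates, the probability that an election
is single-peaked equals `60n / ((n+2)(n+3)(n+4))`. -/
theorem iac_three_candidates (n : ℕ) (hn : 1 ≤ n) :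
    (({M : Multiset (Equiv.Perm (Fin 3)) |
        Multiset.card M = n ∧ ∃ A, ∀ V ∈ M, SPwrt V A}.ncard : ℝ) /
      ({M : Multiset (Equiv.Perm (Fin 3)) | Multiset.card M = n}.ncard : ℝ)) =
      (60 * n : ℝ) / ((n + 2) * (n + 3) * (n + 4)) := by
  have hsp := card_union_sym_notLast_add n (by omega)
  have h4 := factorial_mul_multichoose_succ 3 n
  have h6 := factorial_mul_multichoose_succ 5 n
  simp only [ascFactorial_succ, ascFactorial_zero, factorial, succ_eq_add_one] at h4 h6
  rify at hsp h4 h6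
  have hm4 : (multichoose 4 n : ℝ) = (n + 1) * (n + 2) * (n + 3) / 6 := by linarith
  have hm6 : (multichoose 6 n : ℝ) = (n + 1) * (n + 2) * (n + 3) * (n + 4) * (n + 5) / 120 := by
    linarith
  have hcard : Nat.card (Perm (Fin 3)) = 6 := by
    rw [Nat.card_eq_fintype_card, Fintype.card_perm, Fintype.card_fin]; rfl
  rw [ncard_singlePeaked, Multiset.ncard_setOf_card_eq, hcard, eq_sub_of_add_eq hsp, hm4, hm6]
  field_simp
  ring
end
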